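/- arXiv:2412.19626 — 8 statements merged into one kernel-verified Lean document; each statement's English description precedes it below -/
import Mathlib

section
/- For every complex N×N matrix B and all indices a, b, c : Fin n, one has Tr(2 • (γ_a * γ_c * γ_b * B) − ∑_{d : Fin n} γ_a * γ_c * γ_b * γ_d * {γ_d, B}) = 2 · Tr(−2 δ_{ab} • (γ_c * B) + γ_a * γ_b * {γ_c, B}). (This is the simplification of the terms of the Einstein functional containing the derivative coefficients w_{bc}.) -/
/-!
Write `S X = ∑_d γ_d X γ_d`. Moving `γ_a` through `γ_d` with `γ_a γ_d = 2 δ_{ad} - γ_d γ_a` gives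
the recursion `S (X γ_a) = 2 γ_a X - S X γ_a`, and `S 1 = n`; hence `S (γ_a γ_c γ_b)` is an explicit
combination of reordered triple products. By cyclicity of the trace, the sum on the left-hand side
equals `n Tr(A B) + Tr(S(A) B)` with `A = γ_a γ_c γ_b`, and after substituting `S(A)` the two sides
differ by `Tr({γ_a, γ_b} γ_c B) = 2 δ_{ab} Tr(γ_c B)`.
-/

open Matrix BigOperators

/-- The anticommutator {X, Y} = X*Y + Y*X of two matrices. -/
noncomputable def acomm {N : ℕ} (X Y : Matrix (Fin N) (Fin N) ℂ) : Matrix (Fin N) (Fin N) ℂ :=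
  X * Y + Y * X

instance Matrix.instIsAddTorsionFree {m n R : Type*} [AddMonoid R] [IsAddTorsionFree R] :
    IsAddTorsionFree (Matrix m n R) :=
  inferInstanceAs (IsAddTorsionFree (m → n → R))

def IsCliffordFamily {ι A : Type*} [DecidableEq ι] [Ring A] (γ : ι → A) : Prop :=
  ∀ a b, γ a * γ b + γ b * γ a = if a = b then 2 else 0

def cliffordContraction {ι A : Type*} [Fintype ι] [Ring A] (γ : ι → A) (X : A) : A :=
  ∑ d, γ d * X * γ d

namespace IsCliffordFamily

variable {ι A : Type*} [DecidableEq ι] [Ring A] {γ : ι → A}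

theorem mul_self [IsAddTorsionFree A] (hγ : IsCliffordFamily γ) (a : ι) : γ a * γ a = 1 := by
  have h := hγ a a
  rw [if_pos rfl] at h
  refine IsAddTorsionFree.nsmul_right_injective two_ne_zero ?_
  simp only [two_nsmul, h, one_add_one_eq_two]

theorem mul_eq_ite_sub (hγ : IsCliffordFamily γ) (a b : ι) :
    γ a * γ b = (if a = b then 2 else 0) - γ b * γ a :=
  eq_sub_of_add_eq (hγ a b)

variable [Fintype ι]

theorem cliffordContraction_one [IsAddTorsionFree A] (hγ : IsCliffordFamily γ) :
    cliffordContraction γ 1 = Fintype.card ι := by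
  simp [cliffordContraction, hγ.mul_self]

theorem cliffordContraction_mul (hγ : IsCliffordFamily γ) (X : A) (a : ι) :
    cliffordContraction γ (X * γ a) = 2 * γ a * X - cliffordContraction γ X * γ a := by
  simp only [cliffordContraction, mul_assoc, hγ.mul_eq_ite_sub a, mul_sub, Finset.sum_sub_distrib,
    Finset.sum_mul]
  simp [mul_ite, mul_two, two_mul, mul_add]

theorem cliffordContraction_mul_mul_mul [IsAddTorsionFree A] (hγ : IsCliffordFamily γ)
    (a b c : ι) :
    cliffordContraction γ (γ a * γ b * γ c)
      = 2 * (γ c * γ a * γ b - γ b * γ a * γ c + γ a * γ b * γ c)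
        - Fintype.card ι • (γ a * γ b * γ c) := by
  rw [hγ.cliffordContraction_mul, hγ.cliffordContraction_mul, ← one_mul (γ a),
    hγ.cliffordContraction_mul, hγ.cliffordContraction_one]
  simp only [mul_one, one_mul, sub_mul, mul_assoc, ← nsmul_eq_mul]
  noncomm_ring

theorem trace_sum_mul_mul_acomm {N : ℕ} {γ : ι → Matrix (Fin N) (Fin N) ℂ}
    (hγ : IsCliffordFamily γ) (X B : Matrix (Fin N) (Fin N) ℂ) :
    trace (∑ d, X * γ d * acomm (γ d) B)
      = Fintype.card ι * trace (X * B) + trace (cliffordContraction γ X * B) := by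
  have hsq : ∀ d, X * γ d * (γ d * B) = X * B := fun d => by
    rw [mul_assoc, ← mul_assoc (γ d), hγ.mul_self, one_mul]
  have hcyc : ∀ d, trace (X * γ d * (B * γ d)) = trace (γ d * X * γ d * B) := fun d => by
    rw [← mul_assoc, trace_mul_comm, ← mul_assoc, ← mul_assoc]
  simp only [acomm, mul_add, trace_sum, trace_add, Finset.sum_add_distrib, hsq, hcyc,
    cliffordContraction, Finset.sum_mul]
  rw [Finset.sum_const, Finset.card_univ, nsmul_eq_mul]

end IsCliffordFamily

theorem stmt_4_general (n N : ℕ)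
    (γ : Fin n → Matrix (Fin N) (Fin N) ℂ)
    (hγ : ∀ a b : Fin n, γ a * γ b + γ b * γ a
      = (2 * if a = b then (1:ℂ) else 0) • (1 : Matrix (Fin N) (Fin N) ℂ))
    (B : Matrix (Fin N) (Fin N) ℂ) (a b c : Fin n) :
    Matrix.trace ((2:ℂ) • (γ a * γ c * γ b * B)
        - ∑ d : Fin n, γ a * γ c * γ b * γ d * acomm (γ d) B)
      = 2 * Matrix.trace ((-(2 * if a = b then (1:ℂ) else 0)) • (γ c * B)
          + γ a * γ b * acomm (γ c) B) := by
  have hcl : IsCliffordFamily γ := fun a b => by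
    rw [hγ]
    split_ifs <;> simp [two_smul, one_add_one_eq_two]
  have hab : trace (γ a * γ b * γ c * B) + trace (γ b * γ a * γ c * B)
      = (2 * if a = b then (1:ℂ) else 0) * trace (γ c * B) := by
    rw [← trace_add, ← add_mul, ← add_mul, hγ, smul_mul_assoc, smul_mul_assoc, one_mul,
      trace_smul, smul_eq_mul]
  have hcyc : trace (γ a * γ b * B * γ c) = trace (γ c * γ a * γ b * B) := by
    rw [trace_mul_comm, ← mul_assoc, ← mul_assoc]
  rw [trace_sub, hcl.trace_sum_mul_mul_acomm, hcl.cliffordContraction_mul_mul_mul]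
  generalize (if a = b then (1:ℂ) else 0) = δ at hab ⊢
  simp only [acomm, mul_add, ← mul_assoc, trace_add, trace_sub, trace_smul, hcyc, sub_mul,
    two_mul, add_mul, smul_eq_mul, smul_mul_assoc, Fintype.card_fin]
  rw [nsmul_eq_mul]
  linear_combination (-2:ℂ) * hab

theorem stmt_4 (n N : ℕ) (hn : 0 < n) (hN : 0 < N)
    (γ : Fin n → Matrix (Fin N) (Fin N) ℂ)
    (hγ : ∀ a b : Fin n, γ a * γ b + γ b * γ a
      = (2 * if a = b then (1:ℂ) else 0) • (1 : Matrix (Fin N) (Fin N) ℂ))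
    (B : Matrix (Fin N) (Fin N) ℂ) (a b c : Fin n) :
    Matrix.trace ((2:ℂ) • (γ a * γ c * γ b * B)
        - ∑ d : Fin n, γ a * γ c * γ b * γ d * acomm (γ d) B)
      = 2 * Matrix.trace ((-(2 * if a = b then (1:ℂ) else 0)) • (γ c * B)
          + γ a * γ b * acomm (γ c) B) :=
  stmt_4_general n N γ hγ B a b c
end

section
/- For every family B : Fin n → Matrix (Fin N) (Fin N) ℂ of complex N×N matrices and all indices a, b : Fin n, one has Tr(γ_a * (2 • ∑_c γ_c * γ_b * B_c − ∑_c γ_c * {γ_c, B_b} − ∑_c γ_c * {γ_b, B_c} + γ_b * ∑_c {γ_c, B_c})) = Tr(−2 δ_{ab} • ∑_c γ_c * B_c + γ_a * γ_b * ∑_c {γ_c, B_c}). (This is the simplification of the terms of the Einstein functional that are linear in the perturbation B.) -/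
open Matrix BigOperators

/-!
Only the anticommutation relations and the cyclicity of the trace enter. Cyclicity turns
`Tr(γ_a γ_c {γ_c, Y})` into `Tr({γ_a, γ_c} γ_c Y) = 2 δ_{ac} Tr(γ_c Y)`, and
`Tr(γ_a (γ_c γ_b X - γ_c X γ_b))` into `Tr((γ_a {γ_c, γ_b} - {γ_a, γ_b} γ_c) X)
= 2 δ_{cb} Tr(γ_a X) - 2 δ_{ab} Tr(γ_c X)`. Summed over `c`, the two `Tr(γ_a B_b)` terms cancel.
-/

namespace Matrix

variable {ι m R : Type*} [Fintype m] [CommRing R]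

theorem trace_mul_mul_anticomm (A C Y : Matrix m m R) :
    trace (A * (C * (C * Y + Y * C))) = trace ((A * C + C * A) * C * Y) := by
  have hcyc : trace (A * (C * (Y * C))) = trace (C * A * C * Y) := by
    rw [← Matrix.mul_assoc, ← Matrix.mul_assoc, trace_mul_comm]
    simp only [Matrix.mul_assoc]
  rw [mul_add, mul_add, trace_add, hcyc, add_mul, add_mul, trace_add]
  simp only [Matrix.mul_assoc]

theorem trace_mul_sub_anticomm (A C D X : Matrix m m R) :
    trace (A * ((2 : R) • (C * D * X) - C * (D * X + X * D)))
      = trace ((A * (C * D + D * C) - (A * D + D * A) * C) * X) := by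
  have hcyc : trace (A * (C * (X * D))) = trace (D * A * C * X) := by
    rw [← Matrix.mul_assoc, ← Matrix.mul_assoc, trace_mul_comm]
    simp only [Matrix.mul_assoc]
  have hsplit : A * ((2 : R) • (C * D * X) - C * (D * X + X * D))
      = A * (C * D * X) - A * (C * (X * D)) := by
    simp only [two_smul, Matrix.mul_assoc]
    noncomm_ring
  rw [hsplit, trace_sub, hcyc, ← trace_sub]
  congr 1
  noncomm_ring

variable [DecidableEq m] [DecidableEq ι]

def IsCliffordFamily (γ : ι → Matrix m m R) : Prop :=
  ∀ a b, γ a * γ b + γ b * γ a = (2 * if a = b then (1 : R) else 0) • (1 : Matrix m m R)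

namespace IsCliffordFamily

variable {γ : ι → Matrix m m R}

theorem trace_mul_mul_anticomm (hγ : IsCliffordFamily γ) (a c : ι) (Y : Matrix m m R) :
    trace (γ a * (γ c * (γ c * Y + Y * γ c)))
      = (2 * if a = c then (1 : R) else 0) * trace (γ c * Y) := by
  rw [Matrix.trace_mul_mul_anticomm, hγ a c, smul_mul, smul_mul, one_mul, trace_smul, smul_eq_mul]

theorem trace_mul_sub_anticomm (hγ : IsCliffordFamily γ) (a b c : ι) (X : Matrix m m R) :
    trace (γ a * ((2 : R) • (γ c * γ b * X) - γ c * (γ b * X + X * γ b)))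
      = (2 * if c = b then (1 : R) else 0) * trace (γ a * X)
        - (2 * if a = b then (1 : R) else 0) * trace (γ c * X) := by
  rw [Matrix.trace_mul_sub_anticomm, hγ c b, hγ a b]
  simp only [mul_smul_comm, mul_one, smul_mul, one_mul, sub_mul, trace_sub, trace_smul, smul_eq_mul]

end IsCliffordFamily

end Matrix

theorem stmt_5_general (n N : ℕ)
    (γ : Fin n → Matrix (Fin N) (Fin N) ℂ)
    (hγ : ∀ a b : Fin n, γ a * γ b + γ b * γ a
      = (2 * if a = b then (1:ℂ) else 0) • (1 : Matrix (Fin N) (Fin N) ℂ))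
    (B : Fin n → Matrix (Fin N) (Fin N) ℂ) (a b : Fin n) :
    Matrix.trace (γ a * ((2:ℂ) • ∑ c : Fin n, γ c * γ b * B c
        - ∑ c : Fin n, γ c * acomm (γ c) (B b)
        - ∑ c : Fin n, γ c * acomm (γ b) (B c)
        + γ b * ∑ c : Fin n, acomm (γ c) (B c)))
      = Matrix.trace ((-(2 * if a = b then (1:ℂ) else 0)) • ∑ c : Fin n, γ c * B c
          + γ a * γ b * ∑ c : Fin n, acomm (γ c) (B c)) := by
  have hterm : ∀ c, trace (γ a * ((2:ℂ) • (γ c * γ b * B c) - γ c * acomm (γ b) (B c)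
        - γ c * acomm (γ c) (B b)))
      = (2 * if c = b then (1:ℂ) else 0) * trace (γ a * B c)
        - (2 * if a = b then (1:ℂ) else 0) * trace (γ c * B c)
        - (2 * if a = c then (1:ℂ) else 0) * trace (γ c * B b) := by
    intro c
    rw [mul_sub, trace_sub, acomm, acomm, IsCliffordFamily.trace_mul_sub_anticomm hγ,
      IsCliffordFamily.trace_mul_mul_anticomm hγ]
  have hregroup : (2:ℂ) • ∑ c, γ c * γ b * B c - ∑ c, γ c * acomm (γ c) (B b)
        - ∑ c, γ c * acomm (γ b) (B c)
      = ∑ c, ((2:ℂ) • (γ c * γ b * B c) - γ c * acomm (γ b) (B c) - γ c * acomm (γ c) (B b)) := by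
    rw [Finset.smul_sum, ← Finset.sum_sub_distrib, ← Finset.sum_sub_distrib]
    exact Finset.sum_congr rfl fun c _ => sub_right_comm _ _ _
  rw [hregroup, mul_add, ← Matrix.mul_assoc, Finset.mul_sum, trace_add, trace_add, trace_sum,
    Finset.sum_congr rfl fun c _ => hterm c, trace_smul, trace_sum, smul_eq_mul, Finset.mul_sum]
  have hb : ∑ c, (2 * if c = b then (1:ℂ) else 0) * trace (γ a * B c) = 2 * trace (γ a * B b) := by
    simp
  have ha : ∑ c, (2 * if a = c then (1:ℂ) else 0) * trace (γ c * B b) = 2 * trace (γ a * B b) := by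
    simp
  rw [Finset.sum_sub_distrib, Finset.sum_sub_distrib, ← Finset.mul_sum, hb, ha]
  ring

theorem stmt_5 (n N : ℕ) (hn : 0 < n) (hN : 0 < N)
    (γ : Fin n → Matrix (Fin N) (Fin N) ℂ)
    (hγ : ∀ a b : Fin n, γ a * γ b + γ b * γ a
      = (2 * if a = b then (1:ℂ) else 0) • (1 : Matrix (Fin N) (Fin N) ℂ))
    (B : Fin n → Matrix (Fin N) (Fin N) ℂ) (a b : Fin n) :
    Matrix.trace (γ a * ((2:ℂ) • ∑ c : Fin n, γ c * γ b * B c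
        - ∑ c : Fin n, γ c * acomm (γ c) (B b)
        - ∑ c : Fin n, γ c * acomm (γ b) (B c)
        + γ b * ∑ c : Fin n, acomm (γ c) (B c)))
      = Matrix.trace ((-(2 * if a = b then (1:ℂ) else 0)) • ∑ c : Fin n, γ c * B c
          + γ a * γ b * ∑ c : Fin n, acomm (γ c) (B c)) :=
  stmt_5_general n N γ hγ B a b
end

section
/- For every complex N×N matrix B and all indices a, b : Fin n, one has ∑_{c : Fin n} Tr(γ_a * γ_c * B * γ_c * B * γ_b) = ∑_{c : Fin n} Tr(γ_b * γ_a * B * γ_c * B * γ_c). -/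
/-! Move `γ_a` across `γ_c` with the anticommutation relation, cycle the trace, then move `γ_c`
across `γ_b`: this turns each summand on the left into the corresponding one on the right, up to
the Kronecker-delta terms `2 Tr(B γ_a B γ_b)` and `-2 Tr(γ_a B γ_b B)` left after summing over `c`,
which cancel by cyclicity of the trace. -/

namespace Matrix

variable {R m : Type*} [CommRing R] [Fintype m] [DecidableEq m]

theorem trace_mul_mul_left_of_anticomm {x y : Matrix m m R} {s : R}
    (h : x * y + y * x = s • 1) (Z : Matrix m m R) :
    trace (x * y * Z) = s * trace Z - trace (y * x * Z) := by
  rw [eq_sub_of_add_eq h, sub_mul, trace_sub, smul_mul_assoc, one_mul, trace_smul, smul_eq_mul]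

theorem trace_mul_mul_right_of_anticomm {x y : Matrix m m R} {s : R}
    (h : x * y + y * x = s • 1) (Z : Matrix m m R) :
    trace (Z * x * y) = s * trace Z - trace (Z * y * x) := by
  rw [Matrix.mul_assoc, trace_mul_comm, trace_mul_mul_left_of_anticomm h, trace_mul_comm,
    Matrix.mul_assoc]

theorem trace_mul_swap_of_anticomm {x y z : Matrix m m R} {s t : R}
    (hxz : x * z + z * x = s • 1) (hyz : y * z + z * y = t • 1) (B : Matrix m m R) :
    trace (x * z * B * z * B * y)
      = s * trace (B * z * B * y) - t * trace (x * B * z * B) + trace (y * x * B * z * B * z) := by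
  calc trace (x * z * B * z * B * y)
      = s * trace (B * z * B * y) - trace (z * x * (B * z * B * y)) := by
        rw [← trace_mul_mul_left_of_anticomm hxz]; simp only [Matrix.mul_assoc]
    _ = s * trace (B * z * B * y) - trace (x * B * z * B * y * z) := by
        rw [Matrix.mul_assoc z, trace_mul_comm z]; simp only [Matrix.mul_assoc]
    _ = s * trace (B * z * B * y)
          - (t * trace (x * B * z * B) - trace (x * B * z * B * z * y)) := by
        rw [trace_mul_mul_right_of_anticomm hyz]
    _ = _ := by
        rw [trace_mul_comm (x * B * z * B * z) y]; simp only [Matrix.mul_assoc]; ring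

theorem sum_trace_clifford_swap {ι : Type*} [Fintype ι] [DecidableEq ι] (γ : ι → Matrix m m R)
    (hγ : ∀ a b, γ a * γ b + γ b * γ a = (2 * if a = b then (1 : R) else 0) • 1)
    (B : Matrix m m R) (a b : ι) :
    ∑ c, trace (γ a * γ c * B * γ c * B * γ b) = ∑ c, trace (γ b * γ a * B * γ c * B * γ c) := by
  simp only [fun c => trace_mul_swap_of_anticomm (hγ a c) (hγ b c) B, Finset.sum_add_distrib,
    Finset.sum_sub_distrib, mul_ite, ite_mul, mul_one, mul_zero, zero_mul, Finset.sum_ite_eq,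
    Finset.mem_univ, if_true]
  rw [trace_mul_comm (γ a * B * γ b) B]
  simp only [Matrix.mul_assoc, sub_self, zero_add]

end Matrix

theorem stmt_10_general (n N : ℕ)
    (γ : Fin n → Matrix (Fin N) (Fin N) ℂ)
    (hγ : ∀ a b : Fin n, γ a * γ b + γ b * γ a
      = (2 * if a = b then (1:ℂ) else 0) • (1 : Matrix (Fin N) (Fin N) ℂ))
    (B : Matrix (Fin N) (Fin N) ℂ) (a b : Fin n) :
    ∑ c : Fin n, Matrix.trace (γ a * γ c * B * γ c * B * γ b)
      = ∑ c : Fin n, Matrix.trace (γ b * γ a * B * γ c * B * γ c) :=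
  Matrix.sum_trace_clifford_swap γ hγ B a b

theorem stmt_10 (n N : ℕ) (hn : 0 < n) (hN : 0 < N)
    (γ : Fin n → Matrix (Fin N) (Fin N) ℂ)
    (hγ : ∀ a b : Fin n, γ a * γ b + γ b * γ a
      = (2 * if a = b then (1:ℂ) else 0) • (1 : Matrix (Fin N) (Fin N) ℂ))
    (B : Matrix (Fin N) (Fin N) ℂ) (a b : Fin n) :
    ∑ c : Fin n, Matrix.trace (γ a * γ c * B * γ c * B * γ b)
      = ∑ c : Fin n, Matrix.trace (γ b * γ a * B * γ c * B * γ c) :=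
  stmt_10_general n N γ hγ B a b
end

section
/- For every index c : Fin n, the anticommutator of γ_c with the torsion matrix B₀ is {γ_c, B₀} = −(3i/4) • ∑_{k,l : Fin n} T_{ckl} • (γ_k * γ_l). -/
open Matrix BigOperators

/-!
The anticommutator obeys the graded Leibniz rule
{x, abc} = {x, a} bc - a {x, b} c + ab {x, c}.
For Clifford generators each inner anticommutator is 2δ, so {γ_c, γ_j γ_k γ_l} contracts one
index of `T` with `c`; by total antisymmetry each of the three contractions equals
2 ∑ T_{ckl} γ_k γ_l, and the factor 6 · (-i/8) = -3i/4 gives the result.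
-/

theorem anticomm_mul_mul_leibniz {A : Type*} [Ring A] (x a b c : A) :
    x * (a * b * c) + a * b * c * x
      = (x * a + a * x) * (b * c) - a * ((x * b + b * x) * c) + a * b * (x * c + c * x) := by
  noncomm_ring

section Clifford

variable {R A ι : Type*} [CommRing R] [Ring A] [Algebra R A] [DecidableEq ι] {γ : ι → A}

theorem clifford_anticomm_mul_mul
    (hγ : ∀ a b, γ a * γ b + γ b * γ a = (2 * if a = b then (1 : R) else 0) • (1 : A))
    (c j k l : ι) :
    γ c * (γ j * γ k * γ l) + γ j * γ k * γ l * γ c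
      = (if c = j then (2 : R) • (γ k * γ l) else 0)
        - (if c = k then (2 : R) • (γ j * γ l) else 0)
        + (if c = l then (2 : R) • (γ j * γ k) else 0) := by
  rw [anticomm_mul_mul_leibniz, hγ, hγ, hγ]
  split_ifs <;> simp

theorem clifford_anticomm_antisymm_cubic [Fintype ι]
    (hγ : ∀ a b, γ a * γ b + γ b * γ a = (2 * if a = b then (1 : R) else 0) • (1 : A))
    {T : ι → ι → ι → R} (hT₁ : ∀ j k l, T j k l = -T k j l) (hT₂ : ∀ j k l, T j k l = -T j l k)
    (c : ι) :
    γ c * (∑ j, ∑ k, ∑ l, T j k l • (γ j * γ k * γ l))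
        + (∑ j, ∑ k, ∑ l, T j k l • (γ j * γ k * γ l)) * γ c
      = (6 : R) • ∑ k, ∑ l, T c k l • (γ k * γ l) := by
  simp only [Finset.mul_sum, Finset.sum_mul, mul_smul_comm, smul_mul_assoc,
    ← Finset.sum_add_distrib, ← smul_add]
  simp only [clifford_anticomm_mul_mul hγ, smul_add, smul_sub, smul_ite, smul_zero,
    Finset.sum_add_distrib, Finset.sum_sub_distrib]
  have contract_first : ∑ j, ∑ k, ∑ l, (if c = j then T j k l • (2 : R) • (γ k * γ l) else 0)
      = (2 : R) • ∑ k, ∑ l, T c k l • (γ k * γ l) := by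
    simp only [Finset.sum_ite_irrel, Finset.sum_const_zero, Finset.sum_ite_eq, Finset.mem_univ,
      if_true, Finset.smul_sum, smul_comm (2 : R)]
  have contract_second : ∑ j, ∑ k, ∑ l, (if c = k then T j k l • (2 : R) • (γ j * γ l) else 0)
      = -(2 : R) • ∑ k, ∑ l, T c k l • (γ k * γ l) := by
    rw [Finset.sum_comm]
    simp only [Finset.sum_ite_irrel, Finset.sum_const_zero, Finset.sum_ite_eq, Finset.mem_univ,
      if_true, Finset.smul_sum, hT₁ _ c, smul_smul]
    simp only [neg_mul, mul_neg, mul_comm]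
  have contract_third : ∑ j, ∑ k, ∑ l, (if c = l then T j k l • (2 : R) • (γ j * γ k) else 0)
      = (2 : R) • ∑ k, ∑ l, T c k l • (γ k * γ l) := by
    simp only [Finset.sum_ite_eq, Finset.mem_univ, if_true, Finset.smul_sum, hT₂ _ _ c, hT₁ _ c,
      neg_neg, smul_comm (2 : R)]
  rw [contract_first, contract_second, contract_third]
  module

end Clifford

theorem stmt_11_general (n N : ℕ)
    (γ : Fin n → Matrix (Fin N) (Fin N) ℂ)
    (hγ : ∀ a b : Fin n, γ a * γ b + γ b * γ a
      = (2 * if a = b then (1:ℂ) else 0) • (1 : Matrix (Fin N) (Fin N) ℂ))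
    (T : Fin n → Fin n → Fin n → ℝ)
    (hT1 : ∀ j k l : Fin n, T j k l = - T k j l)
    (hT2 : ∀ j k l : Fin n, T j k l = - T j l k)
    (B₀ : Matrix (Fin N) (Fin N) ℂ)
    (hB : B₀ = (-(Complex.I / 8)) •
      ∑ j : Fin n, ∑ k : Fin n, ∑ l : Fin n, ((T j k l : ℂ)) • (γ j * γ k * γ l))
    (c : Fin n) :
    acomm (γ c) B₀
      = (-(3 * Complex.I / 4)) •
          ∑ k : Fin n, ∑ l : Fin n, ((T c k l : ℂ)) • (γ k * γ l) := by
  have hT1' : ∀ j k l, (T j k l : ℂ) = -(T k j l : ℂ) := fun j k l => by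
    rw [hT1 j k l, Complex.ofReal_neg]
  have hT2' : ∀ j k l, (T j k l : ℂ) = -(T j l k : ℂ) := fun j k l => by
    rw [hT2 j k l, Complex.ofReal_neg]
  rw [acomm, hB, Matrix.mul_smul, Matrix.smul_mul, ← smul_add,
    clifford_anticomm_antisymm_cubic hγ hT1' hT2', smul_smul]
  ring_nf

theorem stmt_11 (n N : ℕ) (hn : 0 < n) (hN : 0 < N)
    (γ : Fin n → Matrix (Fin N) (Fin N) ℂ)
    (hγ : ∀ a b : Fin n, γ a * γ b + γ b * γ a
      = (2 * if a = b then (1:ℂ) else 0) • (1 : Matrix (Fin N) (Fin N) ℂ))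
    (T : Fin n → Fin n → Fin n → ℝ)
    (hT1 : ∀ j k l : Fin n, T j k l = - T k j l)
    (hT2 : ∀ j k l : Fin n, T j k l = - T j l k)
    (B₀ : Matrix (Fin N) (Fin N) ℂ)
    (hB : B₀ = (-(Complex.I / 8)) •
      ∑ j : Fin n, ∑ k : Fin n, ∑ l : Fin n, ((T j k l : ℂ)) • (γ j * γ k * γ l))
    (c : Fin n) :
    acomm (γ c) B₀
      = (-(3 * Complex.I / 4)) •
          ∑ k : Fin n, ∑ l : Fin n, ((T c k l : ℂ)) • (γ k * γ l) :=
  stmt_11_general n N γ hγ T hT1 hT2 B₀ hB c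
end

section
/- The torsion matrix B₀ satisfies the contraction identity ∑_{c : Fin n} {γ_c, B₀} * γ_c = 6 • B₀. -/
/-
Write `C x = ∑_c γ_c x γ_c`. The Clifford relation `γ_c γ_j = 2 δ_cj - γ_j γ_c` gives the recursion
`C (γ_j y) = 2 y γ_j - γ_j C y`, and `C 1 = n`. Three steps of it give
`C (γ_j γ_k γ_l) + n γ_j γ_k γ_l = 2 γ_k γ_l γ_j - 2 γ_j γ_l γ_k + 2 γ_j γ_k γ_l`, and contracting with
the totally antisymmetric `T` turns each of the three terms into `2 B₀`. Since `γ_c² = 1`,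
`∑_c {γ_c, B₀} γ_c = C B₀ + n B₀ = 6 B₀`.
-/

open Matrix BigOperators

open Finset

section AntisymmetricSums

variable {ι R M : Type*} [Fintype ι] [Ring R] [AddCommGroup M] [Module R M]
  {T : ι → ι → ι → R}

theorem sum_smul_swap_of_antisymm (hT : ∀ j k l, T j k l = -T j l k) (f : ι → ι → ι → M) :
    ∑ j, ∑ k, ∑ l, T j k l • f j l k = -∑ j, ∑ k, ∑ l, T j k l • f j k l := by
  simp only [← sum_neg_distrib]
  refine sum_congr rfl fun j _ => ?_
  rw [sum_comm]
  refine sum_congr rfl fun k _ => sum_congr rfl fun l _ => ?_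
  rw [hT j l k, neg_smul]

theorem sum_smul_rotate_of_antisymm (hT₁ : ∀ j k l, T j k l = -T k j l)
    (hT₂ : ∀ j k l, T j k l = -T j l k) (f : ι → ι → ι → M) :
    ∑ j, ∑ k, ∑ l, T j k l • f k l j = ∑ j, ∑ k, ∑ l, T j k l • f j k l := by
  rw [sum_comm]
  refine sum_congr rfl fun k _ => ?_
  rw [sum_comm]
  refine sum_congr rfl fun l _ => sum_congr rfl fun j _ => ?_
  rw [hT₁ j k l, hT₂ k j l, neg_neg]

end AntisymmetricSums

section Contraction

variable {ι A : Type*} [Ring A] {γ : ι → A}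

theorem mul_self_eq_one_of_anticomm [DecidableEq ι] [IsAddTorsionFree A]
    (hγ : ∀ a b, γ a * γ b + γ b * γ a = if a = b then 2 else 0) (a : ι) :
    γ a * γ a = 1 := by
  have h : 2 • (γ a * γ a) = 2 • 1 := by
    rw [two_nsmul, hγ, if_pos rfl, two_nsmul, one_add_one_eq_two]
  exact IsAddTorsionFree.nsmul_right_injective two_ne_zero h

variable [Fintype ι] (R : Type*) [CommRing R] [Algebra R A]

def contraction (γ : ι → A) : A →ₗ[R] A :=
  ∑ c, LinearMap.mulLeft R (γ c) ∘ₗ LinearMap.mulRight R (γ c)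

theorem contraction_apply (x : A) : contraction R γ x = ∑ c, γ c * x * γ c := by
  simp [contraction, LinearMap.sum_apply, mul_assoc]

variable {R} [DecidableEq ι]

theorem contraction_mul_left (hγ : ∀ a b, γ a * γ b + γ b * γ a = if a = b then 2 else 0)
    (j : ι) (y : A) :
    contraction R γ (γ j * y) = 2 * (y * γ j) - γ j * contraction R γ y := by
  have hterm : ∀ c, γ c * (γ j * y) * γ c
      = (if c = j then 2 * (y * γ j) else 0) - γ j * (γ c * y * γ c) := by
    intro c
    rw [← mul_assoc, eq_sub_of_add_eq (hγ c j)]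
    split_ifs with hcj
    · subst hcj; noncomm_ring
    · noncomm_ring
  simp only [contraction_apply, hterm, sum_sub_distrib, sum_ite_eq', mem_univ, if_true, mul_sum]

theorem contraction_one [IsAddTorsionFree A]
    (hγ : ∀ a b, γ a * γ b + γ b * γ a = if a = b then 2 else 0) :
    contraction R γ 1 = Fintype.card ι • (1 : A) := by
  simp [contraction_apply, mul_self_eq_one_of_anticomm hγ]

theorem contraction_triple_add_card_smul [IsAddTorsionFree A]
    (hγ : ∀ a b, γ a * γ b + γ b * γ a = if a = b then 2 else 0) (j k l : ι) :
    contraction R γ (γ j * γ k * γ l) + Fintype.card ι • (γ j * γ k * γ l)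
      = 2 • (γ k * γ l * γ j) - 2 • (γ j * γ l * γ k) + 2 • (γ j * γ k * γ l) := by
  rw [mul_assoc, ← mul_one (γ l), contraction_mul_left hγ, contraction_mul_left hγ,
    contraction_mul_left hγ, contraction_one hγ]
  simp only [mul_one, mul_smul_comm, two_nsmul, two_mul]
  noncomm_ring

theorem contraction_add_card_smul_of_antisymm [IsAddTorsionFree A]
    (hγ : ∀ a b, γ a * γ b + γ b * γ a = if a = b then 2 else 0) {T : ι → ι → ι → R}
    (hT₁ : ∀ j k l, T j k l = -T k j l) (hT₂ : ∀ j k l, T j k l = -T j l k) :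
    contraction R γ (∑ j, ∑ k, ∑ l, T j k l • (γ j * γ k * γ l))
        + Fintype.card ι • ∑ j, ∑ k, ∑ l, T j k l • (γ j * γ k * γ l)
      = 6 • ∑ j, ∑ k, ∑ l, T j k l • (γ j * γ k * γ l) := by
  have hrot := sum_smul_rotate_of_antisymm hT₁ hT₂ fun a b c => γ a * γ b * γ c
  have hswap := sum_smul_swap_of_antisymm hT₂ fun a b c => γ a * γ b * γ c
  calc _ = ∑ j, ∑ k, ∑ l, T j k l • (contraction R γ (γ j * γ k * γ l)
          + Fintype.card ι • (γ j * γ k * γ l)) := by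
        simp only [map_sum, map_smul, smul_sum, smul_add, sum_add_distrib,
          smul_comm (Fintype.card ι)]
    _ = ∑ j, ∑ k, ∑ l, T j k l • (2 • (γ k * γ l * γ j) - 2 • (γ j * γ l * γ k)
          + 2 • (γ j * γ k * γ l)) := by
        simp only [contraction_triple_add_card_smul hγ]
    _ = 2 • ∑ j, ∑ k, ∑ l, T j k l • (γ k * γ l * γ j)
          - 2 • ∑ j, ∑ k, ∑ l, T j k l • (γ j * γ l * γ k)
          + 2 • ∑ j, ∑ k, ∑ l, T j k l • (γ j * γ k * γ l) := by
        simp only [smul_add, smul_sub, sum_add_distrib, sum_sub_distrib, smul_comm (T _ _ _) 2,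
          smul_sum]
    _ = _ := by
        rw [hrot, hswap]
        abel

end Contraction

theorem stmt_12_general (n N : ℕ)
    (γ : Fin n → Matrix (Fin N) (Fin N) ℂ)
    (hγ : ∀ a b : Fin n, γ a * γ b + γ b * γ a
      = (2 * if a = b then (1:ℂ) else 0) • (1 : Matrix (Fin N) (Fin N) ℂ))
    (T : Fin n → Fin n → Fin n → ℝ)
    (hT1 : ∀ j k l : Fin n, T j k l = - T k j l)
    (hT2 : ∀ j k l : Fin n, T j k l = - T j l k)
    (B₀ : Matrix (Fin N) (Fin N) ℂ)
    (hB : B₀ = (-(Complex.I / 8)) •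
      ∑ j : Fin n, ∑ k : Fin n, ∑ l : Fin n, ((T j k l : ℂ)) • (γ j * γ k * γ l)) :
    ∑ c : Fin n, acomm (γ c) B₀ * γ c = (6:ℂ) • B₀ := by
  have : IsAddTorsionFree (Matrix (Fin N) (Fin N) ℂ) := .of_module_rat _
  have hclifford : ∀ a b, γ a * γ b + γ b * γ a = if a = b then 2 else 0 := fun a b => by
    rw [hγ]; split_ifs <;> norm_num [two_smul, one_add_one_eq_two]
  have hsum : ∑ c, acomm (γ c) B₀ * γ c = contraction ℂ γ B₀ + n • B₀ := by
    simp [acomm, add_mul, mul_assoc, mul_self_eq_one_of_anticomm hclifford, sum_add_distrib,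
      contraction_apply]
  have hS := contraction_add_card_smul_of_antisymm (R := ℂ) hclifford
    (T := fun j k l => (T j k l : ℂ)) (fun j k l => by exact_mod_cast hT1 j k l)
    (fun j k l => by exact_mod_cast hT2 j k l)
  rw [Fintype.card_fin] at hS
  rw [hsum, hB, map_smul, smul_comm n, ← smul_add, hS]
  module

theorem stmt_12 (n N : ℕ) (hn : 0 < n) (hN : 0 < N)
    (γ : Fin n → Matrix (Fin N) (Fin N) ℂ)
    (hγ : ∀ a b : Fin n, γ a * γ b + γ b * γ a
      = (2 * if a = b then (1:ℂ) else 0) • (1 : Matrix (Fin N) (Fin N) ℂ))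
    (T : Fin n → Fin n → Fin n → ℝ)
    (hT1 : ∀ j k l : Fin n, T j k l = - T k j l)
    (hT2 : ∀ j k l : Fin n, T j k l = - T j l k)
    (B₀ : Matrix (Fin N) (Fin N) ℂ)
    (hB : B₀ = (-(Complex.I / 8)) •
      ∑ j : Fin n, ∑ k : Fin n, ∑ l : Fin n, ((T j k l : ℂ)) • (γ j * γ k * γ l)) :
    ∑ c : Fin n, acomm (γ c) B₀ * γ c = (6:ℂ) • B₀ :=
  stmt_12_general n N γ hγ T hT1 hT2 B₀ hB
end

section
/- For all indices a, b, c : Fin n, one has Tr([γ_a, γ_b] * {γ_c, B₀}) = 3·i · Tr(1) · T_{abc}, where Tr(1) is the trace of the N×N identity matrix. (This is the trace identity that produces the torsion term −u_a w_{bc} T⁰_{abc} in the Einstein functional of the Dirac operator with totally antisymmetric torsion.) -/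
/-!
Anticommuting `γ c` through `γ j * γ k * γ l` contracts one index at a time, so by total
antisymmetry `{γ c, B₀} = -(3i/4) ∑ T c j k • γ j γ k`. Traced against `[γ a, γ b]`, a product
of two gammas only contributes through `tr([γ a, γ b] γ p γ q) = 2 (δ a q δ b p - δ a p δ b q) tr 1`,
which picks out `2 (T c b a - T c a b) = -4 T a b c`.
-/

open Matrix BigOperators

/-- The commutator [X, Y] = X*Y − Y*X of two matrices. -/
noncomputable def mcomm {N : ℕ} (X Y : Matrix (Fin N) (Fin N) ℂ) : Matrix (Fin N) (Fin N) ℂ :=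
  X * Y - Y * X

section Anticommutator

variable {ι R A : Type*} [CommRing R] [Ring A] [Algebra R A]

theorem anticomm_mul_mul_mul {γ : ι → A} {g : ι → ι → R}
    (hγ : ∀ a b, γ a * γ b + γ b * γ a = (2 * g a b) • (1 : A)) (c j k l : ι) :
    γ c * (γ j * γ k * γ l) + γ j * γ k * γ l * γ c
      = (2 * g c j) • (γ k * γ l) - (2 * g c k) • (γ j * γ l) + (2 * g c l) • (γ j * γ k) := by
  calc γ c * (γ j * γ k * γ l) + γ j * γ k * γ l * γ c
      = (γ c * γ j + γ j * γ c) * (γ k * γ l) - γ j * (γ c * γ k + γ k * γ c) * γ l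
          + γ j * γ k * (γ c * γ l + γ l * γ c) := by noncomm_ring
    _ = _ := by simp only [hγ, smul_mul_assoc, mul_smul_comm, one_mul, mul_one]

theorem anticomm_sum_smul_mul_mul_mul [Fintype ι] [DecidableEq ι] {γ : ι → A}
    (hγ : ∀ a b, γ a * γ b + γ b * γ a = (2 * if a = b then (1 : R) else 0) • (1 : A))
    (T : ι → ι → ι → R) (hT1 : ∀ j k l, T j k l = -T k j l) (hT2 : ∀ j k l, T j k l = -T j l k)
    (c : ι) :
    γ c * (∑ j, ∑ k, ∑ l, T j k l • (γ j * γ k * γ l))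
        + (∑ j, ∑ k, ∑ l, T j k l • (γ j * γ k * γ l)) * γ c
      = (6 : R) • ∑ j, ∑ k, T c j k • (γ j * γ k) := by
  have hcyc : ∀ j k, T j k c = T c j k := fun j k => by rw [hT2, hT1, neg_neg]
  have hswap : ∀ j k, T j c k = -T c j k := fun j k => hT1 j c k
  simp only [Finset.mul_sum, Finset.sum_mul, mul_smul_comm, smul_mul_assoc,
    ← Finset.sum_add_distrib, ← smul_add, anticomm_mul_mul_mul hγ]
  simp only [smul_add, smul_sub, Finset.sum_add_distrib, Finset.sum_sub_distrib, mul_ite, mul_one,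
    mul_zero, ite_smul, zero_smul, smul_ite, smul_zero, Finset.sum_ite_irrel,
    Finset.sum_const_zero, Finset.sum_ite_eq, Finset.mem_univ, if_true]
  simp only [hcyc, hswap, Finset.smul_sum, smul_smul, ← Finset.sum_sub_distrib,
    ← Finset.sum_add_distrib, ← sub_smul, ← add_smul]
  refine Finset.sum_congr rfl fun j _ => Finset.sum_congr rfl fun k _ => ?_
  congr 1
  ring

end Anticommutator

section Trace

variable {ι m R : Type*} [Fintype m] [DecidableEq m] [Field R] [NeZero (2 : R)]
  {γ : ι → Matrix m m R} {g : ι → ι → R}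

theorem trace_mul_of_anticomm
    (hγ : ∀ a b, γ a * γ b + γ b * γ a = (2 * g a b) • (1 : Matrix m m R)) (x y : ι) :
    trace (γ x * γ y) = g x y * trace (1 : Matrix m m R) := by
  have h := congrArg trace (hγ x y)
  rw [trace_add, trace_mul_comm (γ y), trace_smul, smul_eq_mul, ← two_mul, mul_assoc] at h
  exact mul_left_cancel₀ two_ne_zero h

theorem trace_mul_mul_mul_of_anticomm
    (hγ : ∀ a b, γ a * γ b + γ b * γ a = (2 * g a b) • (1 : Matrix m m R)) (x y p q : ι) :
    trace (γ x * γ y * γ p * γ q)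
      = (g x y * g p q - g x p * g y q + g x q * g y p) * trace (1 : Matrix m m R) := by
  -- anticommute `γ x` to the back, then cyclicity of the trace returns it to the front
  have h1 := congrArg (fun M => trace (M * γ p * γ q)) (hγ x y)
  have h2 := congrArg (fun M => trace (γ y * M * γ q)) (hγ x p)
  have h3 := congrArg (fun M => trace (γ y * γ p * M)) (hγ x q)
  have hcyc : trace (γ y * γ p * γ q * γ x) = trace (γ x * γ y * γ p * γ q) := by
    rw [trace_mul_comm, ← Matrix.mul_assoc, ← Matrix.mul_assoc]
  simp only [Matrix.add_mul, Matrix.mul_add, trace_add, Matrix.smul_mul, Matrix.mul_smul,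
    Matrix.one_mul, Matrix.mul_one, trace_smul, smul_eq_mul, ← Matrix.mul_assoc,
    trace_mul_of_anticomm hγ] at h1 h2 h3
  refine mul_left_cancel₀ (two_ne_zero (α := R)) ?_
  linear_combination h1 - h2 + h3 - hcyc

theorem trace_commutator_mul_of_anticomm
    (hγ : ∀ a b, γ a * γ b + γ b * γ a = (2 * g a b) • (1 : Matrix m m R)) (a b p q : ι) :
    trace ((γ a * γ b - γ b * γ a) * (γ p * γ q))
      = 2 * (g a q * g b p - g a p * g b q) * trace (1 : Matrix m m R) := by
  have hcomm : γ a * γ b - γ b * γ a = 2 • (γ a * γ b) - (2 * g a b) • 1 := by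
    rw [← hγ a b]; abel
  rw [hcomm, Matrix.sub_mul, trace_sub, Matrix.smul_mul, Matrix.smul_mul, trace_smul, trace_smul,
    Matrix.one_mul, ← Matrix.mul_assoc, trace_mul_mul_mul_of_anticomm hγ,
    trace_mul_of_anticomm hγ, smul_eq_mul, nsmul_eq_mul]
  ring

theorem sum_mul_trace_commutator_mul_of_orthonormal [Fintype ι] [DecidableEq ι]
    (hγ : ∀ a b, γ a * γ b + γ b * γ a = (2 * if a = b then (1 : R) else 0) • (1 : Matrix m m R))
    (S : ι → ι → R) (a b : ι) :
    ∑ p, ∑ q, S p q * trace ((γ a * γ b - γ b * γ a) * (γ p * γ q))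
      = 2 * (S b a - S a b) * trace (1 : Matrix m m R) := by
  have hdelta : ∑ p, ∑ q, S p q * ((if a = q then 1 else 0) * (if b = p then 1 else 0)
      - (if a = p then 1 else 0) * (if b = q then 1 else 0)) = S b a - S a b := by
    simp [mul_sub, Finset.sum_sub_distrib, mul_ite]
  rw [← hdelta, Finset.mul_sum, Finset.sum_mul]
  simp only [trace_commutator_mul_of_anticomm hγ, Finset.mul_sum, Finset.sum_mul]
  exact Finset.sum_congr rfl fun p _ => Finset.sum_congr rfl fun q _ => by ring

end Trace

theorem stmt_13_general (n N : ℕ)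
    (γ : Fin n → Matrix (Fin N) (Fin N) ℂ)
    (hγ : ∀ a b : Fin n, γ a * γ b + γ b * γ a
      = (2 * if a = b then (1:ℂ) else 0) • (1 : Matrix (Fin N) (Fin N) ℂ))
    (T : Fin n → Fin n → Fin n → ℝ)
    (hT1 : ∀ j k l : Fin n, T j k l = - T k j l)
    (hT2 : ∀ j k l : Fin n, T j k l = - T j l k)
    (B₀ : Matrix (Fin N) (Fin N) ℂ)
    (hB : B₀ = (-(Complex.I / 8)) •
      ∑ j : Fin n, ∑ k : Fin n, ∑ l : Fin n, ((T j k l : ℂ)) • (γ j * γ k * γ l))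
    (a b c : Fin n) :
    Matrix.trace (mcomm (γ a) (γ b) * acomm (γ c) B₀)
      = 3 * Complex.I * Matrix.trace (1 : Matrix (Fin N) (Fin N) ℂ) * (T a b c : ℂ) := by
  have hT1ℂ : ∀ j k l, (T j k l : ℂ) = -T k j l := fun j k l => by exact_mod_cast hT1 j k l
  have hT2ℂ : ∀ j k l, (T j k l : ℂ) = -T j l k := fun j k l => by exact_mod_cast hT2 j k l
  have hB₀ : acomm (γ c) B₀
      = (-(Complex.I / 8) * 6) • ∑ j, ∑ k, (T c j k : ℂ) • (γ j * γ k) := by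
    rw [acomm, hB, Matrix.mul_smul, Matrix.smul_mul, ← smul_add,
      anticomm_sum_smul_mul_mul_mul hγ _ hT1ℂ hT2ℂ, smul_smul]
  have hcab : T c a b = T a b c := by rw [hT1, hT2, neg_neg]
  have hcba : T c b a = -T a b c := by rw [hT2, hcab]
  rw [hB₀, mcomm, Matrix.mul_smul, trace_smul]
  simp only [Matrix.mul_sum, trace_sum, Matrix.mul_smul, trace_smul, smul_eq_mul]
  rw [sum_mul_trace_commutator_mul_of_orthonormal hγ (fun p q => (T c p q : ℂ)), hcab, hcba]
  push_cast
  ring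

theorem stmt_13 (n N : ℕ) (hn : 0 < n) (hN : 0 < N)
    (γ : Fin n → Matrix (Fin N) (Fin N) ℂ)
    (hγ : ∀ a b : Fin n, γ a * γ b + γ b * γ a
      = (2 * if a = b then (1:ℂ) else 0) • (1 : Matrix (Fin N) (Fin N) ℂ))
    (T : Fin n → Fin n → Fin n → ℝ)
    (hT1 : ∀ j k l : Fin n, T j k l = - T k j l)
    (hT2 : ∀ j k l : Fin n, T j k l = - T j l k)
    (B₀ : Matrix (Fin N) (Fin N) ℂ)
    (hB : B₀ = (-(Complex.I / 8)) •
      ∑ j : Fin n, ∑ k : Fin n, ∑ l : Fin n, ((T j k l : ℂ)) • (γ j * γ k * γ l))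
    (a b c : Fin n) :
    Matrix.trace (mcomm (γ a) (γ b) * acomm (γ c) B₀)
      = 3 * Complex.I * Matrix.trace (1 : Matrix (Fin N) (Fin N) ℂ) * (T a b c : ℂ) :=
  stmt_13_general n N γ hγ T hT1 hT2 B₀ hB a b c
end

section
/- For all indices a, b : Fin n, one has Tr((δ_{ab} • B₀ − γ_a * {γ_b, B₀}) * (∑_{c : Fin n} {γ_c, B₀} * γ_c − 2 • B₀)) = (3/8) · Tr(1) · (δ_{ab} · ∑_{i,j,k} T_{ijk}² − 6 · ∑_{j,k} T_{ajk} T_{bjk}), where Tr(1) is the trace of the N×N identity matrix. (This is the quadratic-in-torsion contribution (1/8)(δ^{ab} T⁰_{ijk}T⁰_{ijk} − 6 T⁰_{ajk}T⁰_{bjk}) to the Einstein functional of the Dirac operator with totally antisymmetric torsion.) -/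
/-!
Write `C = ∑ T_jkl γ_j γ_k γ_l` and `S_c = ∑ T_ckl γ_k γ_l`, so that `B₀ = -(i/8) C`. The Clifford
relations give `{γ_c, C} = 6 S_c`, `[γ_a, S_b] = 4 ∑ T_bal γ_l` and `∑ S_c γ_c = C`; hence
`{γ_c, B₀} = -(3i/4) S_c` and the second factor is `-(i/2) C`. Cyclicity of the trace and the same
relations reduce the remaining traces to traces of two gammas:
`tr(S_a S_b) = -2 ∑ T_akl T_bkl tr 1`, `tr(C²) = 3 ∑ tr(S_c²)` and, because `tr(γ_l C) = 0`,
`tr(γ_a S_b C) = 3 tr(S_a S_b)`.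
-/

open Matrix BigOperators

section Slash

variable {ι R A : Type*} [Fintype ι] [CommRing R] [Ring A] [Algebra R A]

/- Feynman slash notation `v̸ = ∑ vᵢ γᵢ`, extended to 2- and 3-tensors. -/
def slash1 (v : ι → R) (γ : ι → A) : A := ∑ i, v i • γ i

def slash2 (S : ι → ι → R) (γ : ι → A) : A := ∑ i, γ i * slash1 (S i) γ

def slash3 (T : ι → ι → ι → R) (γ : ι → A) : A := ∑ i, γ i * slash2 (T i) γ

lemma slash3_eq_sum (T : ι → ι → ι → R) (γ : ι → A) :
    slash3 T γ = ∑ j, ∑ k, ∑ l, T j k l • (γ j * γ k * γ l) := by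
  simp only [slash3, slash2, slash1, Finset.mul_sum, mul_smul_comm, mul_assoc]

variable (γ : ι → A) {T : ι → ι → ι → R} (hT1 : ∀ j k l, T j k l = -T k j l)
  (hT2 : ∀ j k l, T j k l = -T j l k)

include hT1 hT2 in
lemma sum_slash2_mul_gamma : ∑ c, slash2 (T c) γ * γ c = slash3 T γ := by
  simp only [slash3_eq_sum, slash2, slash1, Finset.sum_mul, Finset.mul_sum, smul_mul_assoc,
    mul_smul_comm, mul_assoc]
  rw [Finset.sum_comm]
  refine Finset.sum_congr rfl fun k _ => ?_
  rw [Finset.sum_comm]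
  refine Finset.sum_congr rfl fun l _ => Finset.sum_congr rfl fun c _ => ?_
  rw [hT1, hT2, neg_neg]

variable [DecidableEq ι]
  (hγ : ∀ a b, γ a * γ b + γ b * γ a = (2 * if a = b then (1 : R) else 0) • (1 : A))
include hγ

lemma gamma_mul_slash1_add_slash1_mul (a : ι) (v : ι → R) :
    γ a * slash1 v γ + slash1 v γ * γ a = (2 * v a) • (1 : A) := by
  calc γ a * slash1 v γ + slash1 v γ * γ a = ∑ i, v i • (γ a * γ i + γ i * γ a) := by
        simp only [slash1, Finset.mul_sum, Finset.sum_mul, mul_smul_comm, smul_mul_assoc,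
          smul_add, Finset.sum_add_distrib]
    _ = (2 * v a) • (1 : A) := by
        simp [hγ, smul_smul, mul_comm (v _)]

lemma gamma_mul_slash2_sub_slash2_mul {S : ι → ι → R} (hS : ∀ k l, S k l = -S l k) (a : ι) :
    γ a * slash2 S γ - slash2 S γ * γ a = (4 : R) • slash1 (S a) γ := by
  have hterm : ∀ k, γ a * (γ k * slash1 (S k) γ) - γ k * slash1 (S k) γ * γ a
      = (2 * if a = k then (1 : R) else 0) • slash1 (S k) γ - (2 * S k a) • γ k := by
    intro k
    calc _ = (γ a * γ k + γ k * γ a) * slash1 (S k) γ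
          - γ k * (γ a * slash1 (S k) γ + slash1 (S k) γ * γ a) := by noncomm_ring
      _ = _ := by rw [hγ, gamma_mul_slash1_add_slash1_mul γ hγ]; simp
  have hswap : ∑ k, (2 * S k a) • γ k = (-2 : R) • slash1 (S a) γ := by
    simp [slash1, Finset.smul_sum, smul_smul, hS _ a]
  calc γ a * slash2 S γ - slash2 S γ * γ a
      = ∑ k, (γ a * (γ k * slash1 (S k) γ) - γ k * slash1 (S k) γ * γ a) := by
        rw [slash2, Finset.mul_sum, Finset.sum_mul, Finset.sum_sub_distrib]
    _ = (2 : R) • slash1 (S a) γ - (-2 : R) • slash1 (S a) γ := by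
        rw [Finset.sum_congr rfl fun k _ => hterm k, Finset.sum_sub_distrib, hswap]
        simp [ite_smul]
    _ = (4 : R) • slash1 (S a) γ := by module

include hT1 hT2 in
lemma gamma_mul_slash3_add_slash3_mul (c : ι) :
    γ c * slash3 T γ + slash3 T γ * γ c = (6 : R) • slash2 (T c) γ := by
  have hterm : ∀ j, γ c * (γ j * slash2 (T j) γ) + γ j * slash2 (T j) γ * γ c
      = (2 * if c = j then (1 : R) else 0) • slash2 (T j) γ
        - (4 : R) • (γ j * slash1 (T j c) γ) := by
    intro j
    calc _ = (γ c * γ j + γ j * γ c) * slash2 (T j) γ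
          - γ j * (γ c * slash2 (T j) γ - slash2 (T j) γ * γ c) := by noncomm_ring
      _ = _ := by
        rw [hγ, gamma_mul_slash2_sub_slash2_mul γ hγ (hT2 j)]
        simp
  have hswap : ∑ j, γ j * slash1 (T j c) γ = -slash2 (T c) γ := by
    simp [slash2, slash1, hT1 _ c, Finset.sum_neg_distrib]
  calc γ c * slash3 T γ + slash3 T γ * γ c
      = ∑ j, (γ c * (γ j * slash2 (T j) γ) + γ j * slash2 (T j) γ * γ c) := by
        rw [slash3, Finset.mul_sum, Finset.sum_mul, Finset.sum_add_distrib]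
    _ = (2 : R) • slash2 (T c) γ - (4 : R) • -slash2 (T c) γ := by
        rw [Finset.sum_congr rfl fun j _ => hterm j, Finset.sum_sub_distrib, ← Finset.smul_sum,
          hswap]
        simp [ite_smul]
    _ = (6 : R) • slash2 (T c) γ := by module

end Slash

section Trace

variable {ι m K : Type*} [Fintype ι] [DecidableEq ι] [Fintype m] [DecidableEq m] [Field K]
  [CharZero K] (γ : ι → Matrix m m K)
  (hγ : ∀ a b, γ a * γ b + γ b * γ a = (2 * if a = b then (1 : K) else 0) • (1 : Matrix m m K))
include hγ

lemma trace_gamma_mul_slash1 (a : ι) (v : ι → K) :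
    trace (γ a * slash1 v γ) = v a * trace (1 : Matrix m m K) := by
  have h := congrArg trace (gamma_mul_slash1_add_slash1_mul γ hγ a v)
  rw [trace_add, trace_mul_comm (slash1 v γ), trace_smul, smul_eq_mul] at h
  linear_combination h / 2

lemma trace_slash1_mul_slash1 (v w : ι → K) :
    trace (slash1 v γ * slash1 w γ) = (∑ i, v i * w i) * trace (1 : Matrix m m K) := by
  rw [slash1, Finset.sum_mul, trace_sum]
  simp only [smul_mul_assoc, trace_smul, smul_eq_mul, trace_gamma_mul_slash1 γ hγ, Finset.sum_mul,
    mul_assoc]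

lemma trace_slash2 {S : ι → ι → K} (hS : ∀ k l, S k l = -S l k) : trace (slash2 S γ) = 0 := by
  simp [slash2, trace_sum, trace_gamma_mul_slash1 γ hγ, fun k => self_eq_neg.mp (hS k k)]

lemma trace_slash2_mul_slash2 {S S' : ι → ι → K} (hS : ∀ k l, S k l = -S l k)
    (hS' : ∀ k l, S' k l = -S' l k) :
    trace (slash2 S γ * slash2 S' γ)
      = -2 * (∑ k, ∑ l, S k l * S' k l) * trace (1 : Matrix m m K) := by
  have hrev : ∑ p, slash1 (S' p) γ * γ p = -slash2 S' γ := by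
    rw [slash2, ← Finset.sum_neg_distrib]
    refine Finset.sum_congr rfl fun p _ => ?_
    have h := gamma_mul_slash1_add_slash1_mul γ hγ p (S' p)
    rw [self_eq_neg.mp (hS' p p), mul_zero, zero_smul] at h
    exact eq_neg_of_add_eq_zero_right h
  have hterm : ∀ p, trace (slash2 S γ * (γ p * slash1 (S' p) γ))
      = trace (slash2 S γ * (slash1 (S' p) γ * γ p))
        - 4 * (∑ q, S p q * S' p q) * trace (1 : Matrix m m K) := by
    intro p
    have hcomm : slash2 S γ * γ p = γ p * slash2 S γ - (4 : K) • slash1 (S p) γ := by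
      rw [← gamma_mul_slash2_sub_slash2_mul γ hγ hS p]; abel
    rw [← mul_assoc, hcomm, sub_mul, trace_sub, smul_mul_assoc, trace_smul, smul_eq_mul,
      trace_slash1_mul_slash1 γ hγ, mul_assoc, trace_mul_comm, mul_assoc, mul_assoc]
  have h : trace (slash2 S γ * slash2 S' γ) = -trace (slash2 S γ * slash2 S' γ)
      - 4 * (∑ k, ∑ l, S k l * S' k l) * trace (1 : Matrix m m K) := by
    calc trace (slash2 S γ * slash2 S' γ)
        = ∑ p, trace (slash2 S γ * (γ p * slash1 (S' p) γ)) := by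
          rw [slash2.eq_1 S' γ, Finset.mul_sum, trace_sum]
      _ = -trace (slash2 S γ * slash2 S' γ)
          - 4 * (∑ k, ∑ l, S k l * S' k l) * trace (1 : Matrix m m K) := by
          rw [Finset.sum_congr rfl fun p _ => hterm p, Finset.sum_sub_distrib, ← trace_sum,
            ← Finset.mul_sum, hrev, mul_neg, trace_neg, ← Finset.sum_mul, ← Finset.mul_sum]
  linear_combination h / 2

variable {T : ι → ι → ι → K} (hT1 : ∀ j k l, T j k l = -T k j l)
  (hT2 : ∀ j k l, T j k l = -T j l k)
include hT1 hT2

lemma trace_slash1_mul_slash3 (v : ι → K) : trace (slash1 v γ * slash3 T γ) = 0 := by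
  have hgamma : ∀ a, trace (γ a * slash3 T γ) = 0 := fun a => by
    have h := congrArg trace (gamma_mul_slash3_add_slash3_mul γ hT1 hT2 hγ a)
    rw [trace_add, trace_mul_comm (slash3 T γ), trace_smul, trace_slash2 γ hγ (hT2 a),
      smul_zero] at h
    linear_combination h / 2
  simp [slash1, Finset.sum_mul, trace_sum, hgamma]

lemma trace_slash3_mul_slash3 :
    trace (slash3 T γ * slash3 T γ)
      = -6 * (∑ j, ∑ k, ∑ l, T j k l ^ 2) * trace (1 : Matrix m m K) := by
  have hterm : ∀ c, trace (slash3 T γ * (γ c * slash2 (T c) γ))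
      = 6 * trace (slash2 (T c) γ * slash2 (T c) γ)
        - trace (slash3 T γ * (slash2 (T c) γ * γ c)) := by
    intro c
    have hcomm : slash3 T γ * γ c = (6 : K) • slash2 (T c) γ - γ c * slash3 T γ := by
      rw [← gamma_mul_slash3_add_slash3_mul γ hT1 hT2 hγ c]; abel
    rw [← mul_assoc, hcomm, sub_mul, trace_sub, smul_mul_assoc, trace_smul, smul_eq_mul,
      mul_assoc, trace_mul_comm (γ c), mul_assoc]
  have h : trace (slash3 T γ * slash3 T γ)
      = 6 * ∑ c, trace (slash2 (T c) γ * slash2 (T c) γ) - trace (slash3 T γ * slash3 T γ) := by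
    calc trace (slash3 T γ * slash3 T γ)
        = ∑ c, trace (slash3 T γ * (γ c * slash2 (T c) γ)) := by
          rw [slash3.eq_1 T γ, Finset.mul_sum, trace_sum]
      _ = _ := by
          rw [Finset.sum_congr rfl fun c _ => hterm c, Finset.sum_sub_distrib, ← trace_sum,
            ← Finset.mul_sum _ _ (slash3 T γ), sum_slash2_mul_gamma γ hT1 hT2, Finset.mul_sum]
  have hsq : ∑ c, trace (slash2 (T c) γ * slash2 (T c) γ)
      = -2 * (∑ j, ∑ k, ∑ l, T j k l ^ 2) * trace (1 : Matrix m m K) := by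
    rw [Finset.sum_congr rfl fun c _ => trace_slash2_mul_slash2 γ hγ (hT2 c) (hT2 c)]
    simp only [← sq, Finset.mul_sum, Finset.sum_mul]
  linear_combination h / 2 + 3 * hsq

lemma trace_gamma_mul_slash2_mul_slash3 (a b : ι) :
    trace (γ a * slash2 (T b) γ * slash3 T γ)
      = -6 * (∑ k, ∑ l, T a k l * T b k l) * trace (1 : Matrix m m K) := by
  have hcomm : γ a * slash2 (T b) γ = slash2 (T b) γ * γ a + (4 : K) • slash1 (T b a) γ := by
    rw [← gamma_mul_slash2_sub_slash2_mul γ hγ (hT2 b) a]; abel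
  have hcomm' : γ a * slash3 T γ = (6 : K) • slash2 (T a) γ - slash3 T γ * γ a := by
    rw [← gamma_mul_slash3_add_slash3_mul γ hT1 hT2 hγ a]; abel
  have h : trace (γ a * slash2 (T b) γ * slash3 T γ)
      = 6 * trace (slash2 (T b) γ * slash2 (T a) γ)
        - trace (γ a * slash2 (T b) γ * slash3 T γ) := by
    calc trace (γ a * slash2 (T b) γ * slash3 T γ)
        = trace (slash2 (T b) γ * (γ a * slash3 T γ)) := by
          rw [hcomm, add_mul, trace_add, smul_mul_assoc, trace_smul,
            trace_slash1_mul_slash3 γ hγ hT1 hT2, smul_zero, add_zero, mul_assoc]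
      _ = 6 * trace (slash2 (T b) γ * slash2 (T a) γ)
          - trace (slash2 (T b) γ * slash3 T γ * γ a) := by
          rw [hcomm', mul_sub, trace_sub, mul_smul_comm, trace_smul, smul_eq_mul, mul_assoc]
      _ = _ := by rw [trace_mul_comm _ (γ a), ← mul_assoc]
  rw [trace_mul_comm (slash2 (T b) γ), trace_slash2_mul_slash2 γ hγ (hT2 a) (hT2 b)] at h
  linear_combination h / 2

end Trace

theorem stmt_15_general (n N : ℕ)
    (γ : Fin n → Matrix (Fin N) (Fin N) ℂ)
    (hγ : ∀ a b : Fin n, γ a * γ b + γ b * γ a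
      = (2 * if a = b then (1:ℂ) else 0) • (1 : Matrix (Fin N) (Fin N) ℂ))
    (T : Fin n → Fin n → Fin n → ℝ)
    (hT1 : ∀ j k l : Fin n, T j k l = - T k j l)
    (hT2 : ∀ j k l : Fin n, T j k l = - T j l k)
    (B₀ : Matrix (Fin N) (Fin N) ℂ)
    (hB : B₀ = (-(Complex.I / 8)) •
      ∑ j : Fin n, ∑ k : Fin n, ∑ l : Fin n, ((T j k l : ℂ)) • (γ j * γ k * γ l))
    (a b : Fin n) :
    Matrix.trace (((if a = b then (1:ℂ) else 0) • B₀ - γ a * acomm (γ b) B₀)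
        * (∑ c : Fin n, acomm (γ c) B₀ * γ c - (2:ℂ) • B₀))
      = (3 / 8) * Matrix.trace (1 : Matrix (Fin N) (Fin N) ℂ)
        * ((if a = b then (1:ℂ) else 0)
            * ∑ i : Fin n, ∑ j : Fin n, ∑ k : Fin n, ((T i j k : ℂ)) ^ 2
          - 6 * ∑ j : Fin n, ∑ k : Fin n, ((T a j k : ℂ)) * ((T b j k : ℂ))) := by
  rw [← slash3_eq_sum] at hB
  set Tc : Fin n → Fin n → Fin n → ℂ := fun j k l => T j k l
  have hTc1 : ∀ j k l, Tc j k l = -Tc k j l := fun j k l => by simp [Tc, hT1 j k l]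
  have hTc2 : ∀ j k l, Tc j k l = -Tc j l k := fun j k l => by simp [Tc, hT2 j k l]
  have hacomm : ∀ c, acomm (γ c) B₀ = (-(3 * Complex.I / 4)) • slash2 (Tc c) γ := fun c => by
    rw [acomm, hB, mul_smul_comm, smul_mul_assoc, ← smul_add,
      gamma_mul_slash3_add_slash3_mul γ hTc1 hTc2 hγ, smul_smul]
    congr 1
    ring
  have hsecond : ∑ c, acomm (γ c) B₀ * γ c - (2 : ℂ) • B₀ = (-(Complex.I / 2)) • slash3 Tc γ := by
    simp only [hacomm, smul_mul_assoc, ← Finset.smul_sum, sum_slash2_mul_gamma γ hTc1 hTc2]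
    rw [hB]
    module
  rw [hsecond, hacomm, hB]
  simp only [sub_mul, smul_mul_assoc, mul_smul_comm, trace_sub, trace_smul, smul_eq_mul]
  rw [trace_slash3_mul_slash3 γ hγ hTc1 hTc2, trace_gamma_mul_slash2_mul_slash3 γ hγ hTc1 hTc2]
  ring_nf
  simp only [Complex.I_sq]
  ring

theorem stmt_15 (n N : ℕ) (hn : 0 < n) (hN : 0 < N)
    (γ : Fin n → Matrix (Fin N) (Fin N) ℂ)
    (hγ : ∀ a b : Fin n, γ a * γ b + γ b * γ a
      = (2 * if a = b then (1:ℂ) else 0) • (1 : Matrix (Fin N) (Fin N) ℂ))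
    (T : Fin n → Fin n → Fin n → ℝ)
    (hT1 : ∀ j k l : Fin n, T j k l = - T k j l)
    (hT2 : ∀ j k l : Fin n, T j k l = - T j l k)
    (B₀ : Matrix (Fin N) (Fin N) ℂ)
    (hB : B₀ = (-(Complex.I / 8)) •
      ∑ j : Fin n, ∑ k : Fin n, ∑ l : Fin n, ((T j k l : ℂ)) • (γ j * γ k * γ l))
    (a b : Fin n) :
    Matrix.trace (((if a = b then (1:ℂ) else 0) • B₀ - γ a * acomm (γ b) B₀)
        * (∑ c : Fin n, acomm (γ c) B₀ * γ c - (2:ℂ) • B₀))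
      = (3 / 8) * Matrix.trace (1 : Matrix (Fin N) (Fin N) ℂ)
        * ((if a = b then (1:ℂ) else 0)
            * ∑ i : Fin n, ∑ j : Fin n, ∑ k : Fin n, ((T i j k : ℂ)) ^ 2
          - 6 * ∑ j : Fin n, ∑ k : Fin n, ((T a j k : ℂ)) * ((T b j k : ℂ))) :=
  stmt_15_general n N γ hγ T hT1 hT2 B₀ hB a b
end

section
/- Let w : Fin n → Fin n → Fin n → ℂ be symmetric in its last two arguments, i.e. w_{bcd} = w_{bdc} for all b, c, d. Then for every a : Fin n, ∑_{b,c,d : Fin n} w_{bcd} · (Tr(γ_a * γ_c * γ_b * γ_d) + Tr(γ_a * γ_d * γ_b * γ_c)) + ∑_{b,c,e : Fin n} w_{bcc} · Tr(γ_a * γ_e * γ_b * γ_e) = Tr(1) · (−n · ∑_c w_{acc} + 4 · ∑_b w_{bba}), where Tr(1) is the trace of the N×N identity matrix. (This is the contraction of the third-derivative coefficients of w appearing in the computation of F₂(k).) -/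
/-! Moving `γ_p` to the right end of `γ_p γ_q γ_r γ_s` by three anticommutations and using
cyclicity of the trace gives the standard four-gamma trace identity
`Tr(γ_p γ_q γ_r γ_s) = (δ_pq δ_rs - δ_pr δ_qs + δ_ps δ_qr) Tr 1`. Contracting it against `w`,
the symmetry `w_bcd = w_bdc` makes the two four-gamma sums equal, and the third sum is the
contraction `∑_e Tr(γ_a γ_e γ_b γ_e) = (2 - n) δ_ab Tr 1`. -/

open Matrix BigOperators

section Algebra

variable {ι 𝕜 A : Type*} [DecidableEq ι] [CommRing 𝕜] [Ring A] [Algebra 𝕜 A] {γ : ι → A}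

theorem clifford_mul_four
    (hγ : ∀ a b, γ a * γ b + γ b * γ a = (2 * if a = b then (1 : 𝕜) else 0) • 1) (p q r s : ι) :
    γ p * γ q * γ r * γ s =
      (2 * if p = q then (1 : 𝕜) else 0) • (γ r * γ s)
        - (2 * if p = r then (1 : 𝕜) else 0) • (γ q * γ s)
        + (2 * if p = s then (1 : 𝕜) else 0) • (γ q * γ r)
        - γ q * γ r * γ s * γ p := by
  linear_combination (norm := noncomm_ring)
    hγ p q * γ r * γ s - γ q * hγ p r * γ s + γ q * γ r * hγ p s

end Algebra

section Trace

variable {ι m 𝕜 : Type*} [DecidableEq ι] [Fintype m] [DecidableEq m] [Field 𝕜] [NeZero (2 : 𝕜)]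
  {γ : ι → Matrix m m 𝕜}
  (hγ : ∀ a b, γ a * γ b + γ b * γ a = (2 * if a = b then (1 : 𝕜) else 0) • 1)
include hγ

theorem clifford_trace_mul_two (a b : ι) :
    trace (γ a * γ b) = (if a = b then 1 else 0) * trace (1 : Matrix m m 𝕜) := by
  have h := congrArg trace (hγ a b)
  rw [trace_add, trace_mul_comm (γ b), trace_smul, smul_eq_mul, ← two_mul, mul_assoc] at h
  exact mul_left_cancel₀ two_ne_zero h

theorem clifford_trace_mul_four (p q r s : ι) :
    trace (γ p * γ q * γ r * γ s) =
      ((if p = q then 1 else 0) * (if r = s then 1 else 0)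
        - (if p = r then 1 else 0) * (if q = s then 1 else 0)
        + (if p = s then 1 else 0) * (if q = r then 1 else 0)) * trace (1 : Matrix m m 𝕜) := by
  have h := congrArg trace (clifford_mul_four hγ p q r s)
  have hcyc : trace (γ q * γ r * γ s * γ p) = trace (γ p * γ q * γ r * γ s) := by
    rw [trace_mul_comm, ← mul_assoc, ← mul_assoc]
  simp only [trace_sub, trace_add, trace_smul, smul_eq_mul, clifford_trace_mul_two hγ] at h
  refine mul_left_cancel₀ (two_ne_zero (α := 𝕜)) ?_
  linear_combination h - hcyc

variable [Fintype ι]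

theorem clifford_trace_contract (a b : ι) :
    ∑ e, trace (γ a * γ e * γ b * γ e) =
      (2 - Fintype.card ι) * (if a = b then 1 else 0) * trace (1 : Matrix m m 𝕜) := by
  simp only [clifford_trace_mul_four hγ, ← Finset.sum_mul, Finset.sum_add_distrib,
    Finset.sum_sub_distrib, ite_mul, one_mul, zero_mul, if_true, Finset.sum_ite_eq,
    Finset.mem_univ, Finset.sum_ite_irrel, Finset.sum_const, Finset.card_univ, nsmul_eq_mul,
    mul_one]
  rcases eq_or_ne a b with rfl | hab
  · simp only [if_true, mul_zero]
    ring
  · simp [hab, hab.symm]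

theorem clifford_trace_weighted (w : ι → ι → ι → 𝕜) (a : ι) :
    ∑ b, ∑ c, ∑ d, w b c d * trace (γ a * γ c * γ b * γ d) =
      (∑ b, w b a b - ∑ c, w a c c + ∑ b, w b b a) * trace (1 : Matrix m m 𝕜) := by
  simp only [clifford_trace_mul_four hγ, mul_add, mul_sub, add_mul, sub_mul, mul_ite, ite_mul,
    mul_zero, zero_mul, mul_one, one_mul, Finset.sum_add_distrib, Finset.sum_sub_distrib,
    Finset.sum_ite_irrel, Finset.sum_ite_eq, Finset.sum_ite_eq', Finset.mem_univ, if_true,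
    Finset.sum_const_zero, ← Finset.sum_mul]

theorem clifford_trace_weighted_contract (v : ι → ι → 𝕜) (a : ι) :
    ∑ b, ∑ c, ∑ e, v b c * trace (γ a * γ e * γ b * γ e) =
      (2 - Fintype.card ι) * (∑ c, v a c) * trace (1 : Matrix m m 𝕜) := by
  calc _ = ∑ b, (∑ c, v b c) * ∑ e, trace (γ a * γ e * γ b * γ e) := by
        simp only [Finset.sum_mul_sum]
    _ = _ := by
        simp only [clifford_trace_contract hγ, mul_ite, mul_one, mul_zero, ite_mul, zero_mul,
          Finset.sum_ite_eq, Finset.mem_univ, if_true]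
        ring

end Trace

theorem stmt_16_general (n N : ℕ)
    (γ : Fin n → Matrix (Fin N) (Fin N) ℂ)
    (hγ : ∀ a b : Fin n, γ a * γ b + γ b * γ a
      = (2 * if a = b then (1:ℂ) else 0) • (1 : Matrix (Fin N) (Fin N) ℂ))
    (w : Fin n → Fin n → Fin n → ℂ)
    (hw : ∀ b c d : Fin n, w b c d = w b d c)
    (a : Fin n) :
    (∑ b : Fin n, ∑ c : Fin n, ∑ d : Fin n,
        w b c d * (Matrix.trace (γ a * γ c * γ b * γ d)
          + Matrix.trace (γ a * γ d * γ b * γ c)))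
      + (∑ b : Fin n, ∑ c : Fin n, ∑ e : Fin n,
          w b c c * Matrix.trace (γ a * γ e * γ b * γ e))
      = Matrix.trace (1 : Matrix (Fin N) (Fin N) ℂ)
        * (-(n:ℂ) * ∑ c : Fin n, w a c c + 4 * ∑ b : Fin n, w b b a) := by
  have hswap : ∑ b, ∑ c, ∑ d, w b c d * trace (γ a * γ d * γ b * γ c) =
      ∑ b, ∑ c, ∑ d, w b c d * trace (γ a * γ c * γ b * γ d) :=
    Finset.sum_congr rfl fun b _ => by rw [Finset.sum_comm]; simp only [hw b]
  simp only [mul_add, Finset.sum_add_distrib, hswap, clifford_trace_weighted hγ,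
    clifford_trace_weighted_contract hγ, Fintype.card_fin, fun b => hw b a b]
  ring

theorem stmt_16 (n N : ℕ) (hn : 0 < n) (hN : 0 < N)
    (γ : Fin n → Matrix (Fin N) (Fin N) ℂ)
    (hγ : ∀ a b : Fin n, γ a * γ b + γ b * γ a
      = (2 * if a = b then (1:ℂ) else 0) • (1 : Matrix (Fin N) (Fin N) ℂ))
    (w : Fin n → Fin n → Fin n → ℂ)
    (hw : ∀ b c d : Fin n, w b c d = w b d c)
    (a : Fin n) :
    (∑ b : Fin n, ∑ c : Fin n, ∑ d : Fin n,
        w b c d * (Matrix.trace (γ a * γ c * γ b * γ d)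
          + Matrix.trace (γ a * γ d * γ b * γ c)))
      + (∑ b : Fin n, ∑ c : Fin n, ∑ e : Fin n,
          w b c c * Matrix.trace (γ a * γ e * γ b * γ e))
      = Matrix.trace (1 : Matrix (Fin N) (Fin N) ℂ)
        * (-(n:ℂ) * ∑ c : Fin n, w a c c + 4 * ∑ b : Fin n, w b b a) :=
  stmt_16_general n N γ hγ w hw a
end
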